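/- arXiv:0909.4595 — 2 statements merged into one kernel-verified Lean document; each statement's English description precedes it below -/
import Mathlib

section
/- Under the same Davies perturbation setup, for complex-valued u in the form domain one has Re(a_ρ(u,u) + 2ρ²‖u‖₂²) ≥ a(u,u) and Re(a_ρ(u,u) + 2ρ²‖u‖₂²) ≥ ρ²‖u‖₂², where a_ρ(u,u) = a(u,u) + 2iρ Im∫ u ∇φ · ∇ū − ρ² ∫ |∇φ|² |u|². -/
open MeasureTheory

/-- for complex-valued `u`, with
`a_ρ(u,u) = a(u,u) + 2iρ Im∫ u∇φ·∇ū − ρ²∫|∇φ|²|u|²` and `|∇φ| ≤ 1` a.e., one has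
`Re(a_ρ(u,u) + 2ρ²‖u‖₂²) ≥ a(u,u)` and `Re(a_ρ(u,u) + 2ρ²‖u‖₂²) ≥ ρ²‖u‖₂²`. -/
theorem stmt5 (N : ℕ) (ρ a Iim : ℝ) (hρ : 0 < ρ) (ha : 0 ≤ a)
    (φ : EuclideanSpace ℝ (Fin N) → ℝ)
    (hφgrad : ∀ᵐ x : EuclideanSpace ℝ (Fin N), ‖fderiv ℝ φ x‖ ≤ 1)
    (u : EuclideanSpace ℝ (Fin N) → ℂ)
    (hu : Integrable (fun x => ‖u x‖ ^ 2))
    (aρ : ℂ)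
    (haρ : aρ = (a : ℂ) + 2 * ρ * Iim * Complex.I
        - ((ρ ^ 2 * ∫ x, ‖fderiv ℝ φ x‖ ^ 2 * ‖u x‖ ^ 2 : ℝ) : ℂ)) :
    a ≤ (aρ + ((2 * ρ ^ 2 * ∫ x, ‖u x‖ ^ 2 : ℝ) : ℂ)).re ∧
    ρ ^ 2 * (∫ x, ‖u x‖ ^ 2) ≤ (aρ + ((2 * ρ ^ 2 * ∫ x, ‖u x‖ ^ 2 : ℝ) : ℂ)).re := by
  have hbound : ∀ᵐ x : EuclideanSpace ℝ (Fin N),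
      ‖fderiv ℝ φ x‖ ^ 2 * ‖u x‖ ^ 2 ≤ ‖u x‖ ^ 2 := by
    filter_upwards [hφgrad] with x hx
    have h1 : ‖fderiv ℝ φ x‖ ^ 2 ≤ 1 := by nlinarith [norm_nonneg (fderiv ℝ φ x)]
    nlinarith [sq_nonneg (‖u x‖)]
  have hmeas : AEStronglyMeasurable
      (fun x => ‖fderiv ℝ φ x‖ ^ 2 * ‖u x‖ ^ 2) volume := by
    exact (((measurable_fderiv ℝ φ).norm.pow_const 2).aestronglyMeasurable.mul
      hu.aestronglyMeasurable)
  have hint : Integrable (fun x => ‖fderiv ℝ φ x‖ ^ 2 * ‖u x‖ ^ 2) := by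
    refine hu.mono' hmeas ?_
    filter_upwards [hbound] with x hx
    have h0 : 0 ≤ ‖fderiv ℝ φ x‖ ^ 2 * ‖u x‖ ^ 2 := by positivity
    simpa [abs_of_nonneg h0] using hx
  have hle : (∫ x, ‖fderiv ℝ φ x‖ ^ 2 * ‖u x‖ ^ 2) ≤ ∫ x, ‖u x‖ ^ 2 :=
    integral_mono_ae hint hu hbound
  have hnn : 0 ≤ ∫ x, ‖fderiv ℝ φ x‖ ^ 2 * ‖u x‖ ^ 2 :=
    integral_nonneg fun x => by positivity
  have hre : (aρ + ((2 * ρ ^ 2 * ∫ x, ‖u x‖ ^ 2 : ℝ) : ℂ)).re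
      = a - ρ ^ 2 * (∫ x, ‖fderiv ℝ φ x‖ ^ 2 * ‖u x‖ ^ 2)
        + 2 * ρ ^ 2 * ∫ x, ‖u x‖ ^ 2 := by
    simp [haρ, Complex.add_re, Complex.sub_re, ← Complex.ofReal_pow]
  rw [hre]
  constructor
  · nlinarith [sq_nonneg ρ]
  · nlinarith [sq_nonneg ρ]
end

section
/- Kernel-sum off-diagonal bound: let g_{r²}(t) = Σ_{k=0}^{m} C(m,k) (−1)^k χ_{{t > k r²}} / √(t − k r²) for r > 0 and integer m ≥ 1. Then for k r² < t ≤ (k+1) r² ≤ (m+1) r² one has |g_{r²}(t)| ≤ C/√(t − k r²), and for t > (m+1) r² one has |g_{r²}(t)| ≤ C r^{2m} t^{−m−1/2}, where C depends only on m. -/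
/-!
Write `h = r²`. Once `t > m h` every indicator in `g_h(t)` equals one, and reflecting the sum
shows `g_h(t) = Δ_h^m (s ↦ s^{-1/2}) (t - m h)`. Forward differences commute with
differentiation, so the mean value theorem applied `m` times bounds this by
`(1/2)_m h^m (t - m h)^{-m-1/2}`; for `t > (m+1) h` we have `t - m h ≥ t / (m+1)`.
Near the diagonal, `t ≤ (k+1) h` only lets terms with `j ≤ k` survive, each at most
`C(m,j) / √(t - k h)`.
-/

open Finset fwdDiff Polynomial

theorem hasDerivAt_fwdDiff_iter {𝕜 F : Type*} [NontriviallyNormedField 𝕜] [NormedAddCommGroup F]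
    [NormedSpace 𝕜 F] {f f' : 𝕜 → F} {h x : 𝕜} (n : ℕ)
    (hf : ∀ k ≤ n, HasDerivAt f (f' (x + k • h)) (x + k • h)) :
    HasDerivAt ((Δ_[h])^[n] f) ((Δ_[h])^[n] f' x) x := by
  have hsum : (Δ_[h])^[n] f = fun y ↦ ∑ k ∈ range (n + 1),
      ((-1 : ℤ) ^ (n - k) * n.choose k) • f (y + k • h) :=
    funext (fwdDiff_iter_eq_sum_shift h f n)
  rw [hsum, fwdDiff_iter_eq_sum_shift]
  refine HasDerivAt.fun_sum fun k hk ↦ ?_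
  exact ((hf k (Nat.lt_succ_iff.mp (mem_range.mp hk))).comp_add_const x _).const_smul
    ((-1 : ℤ) ^ (n - k) * n.choose k)

theorem abs_fwdDiff_iter_rpow_le {p h : ℝ} (hp : p ≤ 0) (hh : 0 ≤ h) (n : ℕ) {x : ℝ}
    (hx : 0 < x) :
    |(Δ_[h])^[n] (fun s ↦ s ^ p) x| ≤ (ascPochhammer ℝ n).eval (-p) * h ^ n * x ^ (p - n) := by
  induction n generalizing p x with
  | zero => simp [abs_of_nonneg (Real.rpow_nonneg hx.le p)]
  | succ n ih =>
    set C := (ascPochhammer ℝ n).eval (-p + 1) * h ^ n * x ^ (p - 1 - n)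
    have hderiv : ∀ y ∈ Set.Icc x (x + h), HasDerivWithinAt ((Δ_[h])^[n] (fun s ↦ s ^ p))
        ((Δ_[h])^[n] (p • fun s : ℝ ↦ s ^ (p - 1)) y) (Set.Icc x (x + h)) y := by
      intro y hy
      refine (hasDerivAt_fwdDiff_iter n fun k _ ↦ ?_).hasDerivWithinAt
      have : 0 < y + k • h := by linarith [hy.1, nsmul_nonneg hh k]
      exact Real.hasDerivAt_rpow_const (Or.inl this.ne')
    have hbound : ∀ y ∈ Set.Ico x (x + h),
        ‖(Δ_[h])^[n] (p • fun s : ℝ ↦ s ^ (p - 1)) y‖ ≤ -p * C := by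
      intro y hy
      have hy0 : 0 < y := hx.trans_le hy.1
      rw [fwdDiff_iter_const_smul, Pi.smul_apply, smul_eq_mul, Real.norm_eq_abs, abs_mul,
        abs_of_nonpos hp]
      refine mul_le_mul_of_nonneg_left ?_ (neg_nonneg.mpr hp)
      calc _ ≤ (ascPochhammer ℝ n).eval (-(p - 1)) * h ^ n * y ^ (p - 1 - n) :=
            ih (by linarith) hy0
        _ ≤ C := by
          rw [neg_sub', sub_neg_eq_add]
          have hP : 0 ≤ (ascPochhammer ℝ n).eval (-p + 1) :=
            (ascPochhammer_pos n _ (by linarith)).le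
          have hexp : p - 1 - n ≤ 0 := by linarith [n.cast_nonneg (α := ℝ)]
          exact mul_le_mul_of_nonneg_left (Real.rpow_le_rpow_of_nonpos hx hy.1 hexp) (by positivity)
    have hmvt := norm_image_sub_le_of_norm_deriv_le_segment' hderiv hbound (x + h)
      ⟨by linarith, le_rfl⟩
    calc |(Δ_[h])^[n + 1] (fun s ↦ s ^ p) x|
        = ‖(Δ_[h])^[n] (fun s ↦ s ^ p) (x + h) - (Δ_[h])^[n] (fun s ↦ s ^ p) x‖ := by
          rw [Function.iterate_succ_apply']; rfl
      _ ≤ -p * C * (x + h - x) := hmvt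
      _ = _ := by
          simp only [C, ascPochhammer_succ_left, eval_mul, eval_X, eval_comp, eval_add, eval_one]
          push_cast
          ring_nf

noncomputable def truncatedKernel (m : ℕ) (h t : ℝ) : ℝ :=
  ∑ k ∈ range (m + 1), (m.choose k : ℝ) * (-1) ^ k *
    (if (k : ℝ) * h < t then 1 / √(t - k * h) else 0)

theorem abs_truncatedKernel_le_of_mem_Ioc (m : ℕ) {h t : ℝ} {k : ℕ} (hh : 0 ≤ h)
    (hkt : k * h < t) (htk : t ≤ (k + 1) * h) :
    |truncatedKernel m h t| ≤ 2 ^ m / √(t - k * h) := by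
  have hterm : ∀ j ∈ range (m + 1), |(m.choose j : ℝ) * (-1) ^ j *
      (if (j : ℝ) * h < t then 1 / √(t - j * h) else 0)| ≤ m.choose j * (1 / √(t - k * h)) := by
    intro j _
    rw [abs_mul, abs_mul, abs_pow, abs_neg, abs_one, one_pow, mul_one, Nat.abs_cast]
    refine mul_le_mul_of_nonneg_left ?_ (Nat.cast_nonneg _)
    split_ifs with hjt
    · have hjk : (j : ℝ) ≤ k := by
        have : (j : ℝ) < k + 1 := lt_of_mul_lt_mul_right (hjt.trans_le htk) hh
        exact_mod_cast Nat.lt_succ_iff.mp (by exact_mod_cast this)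
      rw [abs_of_nonneg (by positivity)]
      gcongr
    · simp only [abs_zero]; positivity
  calc |truncatedKernel m h t| ≤ ∑ j ∈ range (m + 1), (m.choose j : ℝ) * (1 / √(t - k * h)) :=
        (abs_sum_le_sum_abs _ _).trans (sum_le_sum hterm)
    _ = 2 ^ m / √(t - k * h) := by
        rw [← sum_mul, ← Nat.cast_sum, Nat.sum_range_choose]; push_cast; ring

theorem truncatedKernel_eq_fwdDiff_iter (m : ℕ) {h t : ℝ} (hh : 0 ≤ h) (hmt : m * h < t) :
    truncatedKernel m h t = (Δ_[h])^[m] (fun s ↦ s ^ (-(1 / 2) : ℝ)) (t - m * h) := by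
  rw [fwdDiff_iter_eq_sum_shift, ← sum_range_reflect, truncatedKernel]
  refine sum_congr rfl fun k hk ↦ ?_
  have hkm : k ≤ m := Nat.lt_succ_iff.mp (mem_range.mp hk)
  have hkt : (k : ℝ) * h < t := by
    have : (k : ℝ) ≤ m := by exact_mod_cast hkm
    nlinarith
  rw [if_pos hkt, add_tsub_cancel_right, Nat.sub_sub_self hkm, Nat.choose_symm hkm, nsmul_eq_mul,
    Nat.cast_sub hkm, one_div, Real.sqrt_eq_rpow, ← Real.rpow_neg (by linarith),
    zsmul_eq_mul]
  push_cast
  ring_nf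

theorem abs_truncatedKernel_le_of_lt (m : ℕ) {h t : ℝ} (hh : 0 < h) (ht : (m + 1) * h < t) :
    |truncatedKernel m h t| ≤ (ascPochhammer ℝ m).eval (1 / 2) * (m + 1) ^ ((m : ℝ) + 1 / 2) *
      h ^ m * t ^ (-(m : ℝ) - 1 / 2) := by
  have hm : (0 : ℝ) < m + 1 := by positivity
  have hmt : m * h < t := by linarith
  have ht0 : 0 < t := by nlinarith
  have hfar : t / (m + 1) ≤ t - m * h := by
    rw [div_le_iff₀ hm]; nlinarith [m.cast_nonneg (α := ℝ)]
  have hexp : -(m : ℝ) - 1 / 2 ≤ 0 := by linarith [m.cast_nonneg (α := ℝ)]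
  rw [truncatedKernel_eq_fwdDiff_iter m hh.le hmt]
  calc _ ≤ (ascPochhammer ℝ m).eval (1 / 2) * h ^ m * (t - m * h) ^ (-(m : ℝ) - 1 / 2) := by
        convert abs_fwdDiff_iter_rpow_le (p := -(1 / 2)) (by norm_num) hh.le m (sub_pos.mpr hmt)
          using 3 <;> ring_nf
    _ ≤ (ascPochhammer ℝ m).eval (1 / 2) * h ^ m * (t / (m + 1)) ^ (-(m : ℝ) - 1 / 2) := by
        have := (ascPochhammer_pos m (1 / 2 : ℝ) (by norm_num)).le
        exact mul_le_mul_of_nonneg_left (Real.rpow_le_rpow_of_nonpos (by positivity) hfar hexp)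
          (by positivity)
    _ = _ := by
        have hinv : ((m : ℝ) + 1) ^ (-(m : ℝ) - 1 / 2) = (((m : ℝ) + 1) ^ ((m : ℝ) + 1 / 2))⁻¹ := by
          rw [← Real.rpow_neg hm.le]; ring_nf
        rw [Real.div_rpow ht0.le hm.le, hinv, div_inv_eq_mul]
        ring

theorem stmt11_general (m : ℕ) :
    ∃ C : ℝ, 0 < C ∧ ∀ r : ℝ, 0 < r →
      ∀ g : ℝ → ℝ,
        (g = fun t => ∑ k ∈ Finset.range (m + 1), (m.choose k : ℝ) * (-1) ^ k *
          (if (k : ℝ) * r ^ 2 < t then 1 / Real.sqrt (t - (k : ℝ) * r ^ 2) else 0)) →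
        (∀ k : ℕ, k ≤ m → ∀ t : ℝ, (k : ℝ) * r ^ 2 < t → t ≤ ((k : ℝ) + 1) * r ^ 2 →
          |g t| ≤ C / Real.sqrt (t - (k : ℝ) * r ^ 2)) ∧
        (∀ t : ℝ, ((m : ℝ) + 1) * r ^ 2 < t →
          |g t| ≤ C * r ^ (2 * (m : ℝ)) * t ^ (-(m : ℝ) - 1 / 2)) := by
  set A := (ascPochhammer ℝ m).eval (1 / 2) * (m + 1) ^ ((m : ℝ) + 1 / 2)
  have hA : 0 < A := by
    have := ascPochhammer_pos m (1 / 2 : ℝ) (by norm_num)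
    positivity
  refine ⟨2 ^ m + A, by positivity, fun r hr g hg ↦ ?_⟩
  obtain rfl : g = truncatedKernel m (r ^ 2) := hg
  refine ⟨fun k _ t hkt htk ↦ ?_, fun t ht ↦ ?_⟩
  · refine (abs_truncatedKernel_le_of_mem_Ioc m (by positivity) hkt htk).trans ?_
    gcongr
    linarith
  · have hr2m : r ^ (2 * (m : ℝ)) = (r ^ 2) ^ m := by
      rw [← pow_mul, ← Real.rpow_natCast]; push_cast; rfl
    rw [hr2m]
    have ht0 : 0 < t := lt_of_le_of_lt (by positivity) ht
    refine (abs_truncatedKernel_le_of_lt m (by positivity) ht).trans ?_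
    gcongr
    exact le_add_of_nonneg_left (by positivity)

/-- bounds on the kernel
`g_{r²}(t) = Σ_{k=0}^m C(m,k)(−1)^k χ_{t>kr²}/√(t−kr²)` : there is `C > 0` depending
only on `m` such that `|g_{r²}(t)| ≤ C/√(t−kr²)` for `kr² < t ≤ (k+1)r² ≤ (m+1)r²`,
and `|g_{r²}(t)| ≤ C r^{2m} t^{−m−1/2}` for `t > (m+1)r²`. -/
theorem stmt11 (m : ℕ) (hm : 1 ≤ m) :
    ∃ C : ℝ, 0 < C ∧ ∀ r : ℝ, 0 < r →
      ∀ g : ℝ → ℝ,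
        (g = fun t => ∑ k ∈ Finset.range (m + 1), (m.choose k : ℝ) * (-1) ^ k *
          (if (k : ℝ) * r ^ 2 < t then 1 / Real.sqrt (t - (k : ℝ) * r ^ 2) else 0)) →
        (∀ k : ℕ, k ≤ m → ∀ t : ℝ, (k : ℝ) * r ^ 2 < t → t ≤ ((k : ℝ) + 1) * r ^ 2 →
          |g t| ≤ C / Real.sqrt (t - (k : ℝ) * r ^ 2)) ∧
        (∀ t : ℝ, ((m : ℝ) + 1) * r ^ 2 < t →
          |g t| ≤ C * r ^ (2 * (m : ℝ)) * t ^ (-(m : ℝ) - 1 / 2)) :=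
  stmt11_general m
end
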